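/- arXiv:1712.02523 — 7 statements merged into one kernel-verified Lean document; each statement's English description precedes it below -/
import Mathlib

section
/- Let R be a commutative ring and let f : X ⟶ Y be a morphism of unbounded chain complexes of R-modules (complexes indexed by ℤ with differentials lowering degree by one). Then f is a quasi-isomorphism if and only if for every n ∈ ℤ the following holds: for every a ∈ X_n with d(a) = 0 and every b ∈ Y_{n+1} with d(b) = f(a), there exist c ∈ X_{n+1} with d(c) = a and e ∈ Y_{n+2} with d(e) = f(c) − b. -/
open CategoryTheory HomologicalComplex

variable {R : Type u} [CommRing R]

namespace Scratch

lemma iso_bij {A B : ModuleCat.{u} R} (e : A ≅ B) : Function.Bijective ⇑e.hom :=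
  e.toLinearEquiv.bijective

lemma inj_conj {A B A' B' : ModuleCat.{u} R} (e₁ : A ≅ A') (e₂ : B ≅ B') (g : A' ⟶ B') :
    Function.Injective ⇑(e₁.hom ≫ g ≫ e₂.inv) ↔ Function.Injective ⇑g := by
  simp only [ConcreteCategory.coe_comp]
  constructor
  · intro h x y hxy
    have : (⇑e₂.inv ∘ ⇑g ∘ ⇑e₁.hom) (e₁.inv x) = (⇑e₂.inv ∘ ⇑g ∘ ⇑e₁.hom) (e₁.inv y) := by
      simp only [Function.comp_apply]
      congr 1
      rw [show e₁.hom (e₁.inv x) = x from e₁.toLinearEquiv.apply_symm_apply x,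
        show e₁.hom (e₁.inv y) = y from e₁.toLinearEquiv.apply_symm_apply y, hxy]
    exact (iso_bij e₁.symm).injective (h this)
  · intro h
    exact ((iso_bij e₂.symm).injective.comp h).comp (iso_bij e₁).injective

lemma surj_conj {A B A' B' : ModuleCat.{u} R} (e₁ : A ≅ A') (e₂ : B ≅ B') (g : A' ⟶ B') :
    Function.Surjective ⇑(e₁.hom ≫ g ≫ e₂.inv) ↔ Function.Surjective ⇑g := by
  simp only [ConcreteCategory.coe_comp]
  constructor
  · intro h y
    obtain ⟨x, hx⟩ := h (e₂.inv y)
    exact ⟨e₁.hom x, (iso_bij e₂.symm).injective (by simpa using hx)⟩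
  · intro h
    exact ((iso_bij e₂.symm).surjective.comp h).comp (iso_bij e₁).surjective

variable {S₁ S₂ : ShortComplex (ModuleCat.{u} R)} (φ : S₁ ⟶ S₂)

lemma mapsKer : ∀ x ∈ LinearMap.ker S₁.g.hom, φ.τ₂ x ∈ LinearMap.ker S₂.g.hom := by
  intro x hx
  have := congrArg (fun (g : S₁.X₂ ⟶ S₂.X₃) => g x) φ.comm₂₃
  simp only [ConcreteCategory.coe_comp, Function.comp_apply] at this
  simp only [LinearMap.mem_ker] at hx ⊢
  rw [this, hx, map_zero]

noncomputable def mapK : LinearMap.ker S₁.g.hom →ₗ[R] LinearMap.ker S₂.g.hom :=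
  LinearMap.restrict φ.τ₂.hom (mapsKer φ)

lemma comm12_apply (x₁ : S₁.X₁) : S₂.f (φ.τ₁ x₁) = φ.τ₂ (S₁.f x₁) := by
  have := congrArg (fun (g : S₁.X₁ ⟶ S₂.X₂) => g x₁) φ.comm₁₂
  simpa only [ConcreteCategory.coe_comp, Function.comp_apply] using this

lemma mapK_range : LinearMap.range S₁.moduleCatToCycles ≤
    Submodule.comap (mapK φ) (LinearMap.range S₂.moduleCatToCycles) := by
  rintro z ⟨x₁, rfl⟩
  refine ⟨φ.τ₁ x₁, ?_⟩
  ext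
  exact comm12_apply φ x₁

noncomputable def mapH : S₁.moduleCatLeftHomologyData.H ⟶ S₂.moduleCatLeftHomologyData.H :=
  ModuleCat.ofHom (Submodule.mapQ _ _ (mapK φ) (mapK_range φ))

noncomputable def myγ : ShortComplex.LeftHomologyMapData φ
    S₁.moduleCatLeftHomologyData S₂.moduleCatLeftHomologyData where
  φK := ModuleCat.ofHom (mapK φ)
  φH := mapH φ
  commi := by
    ext z
    simp only [ConcreteCategory.coe_comp, Function.comp_apply]
    rfl
  commf' := by
    ext x₁
    apply Subtype.ext
    simp only [ConcreteCategory.coe_comp, Function.comp_apply]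
    exact (comm12_apply φ x₁).symm
  commπ := by
    ext z
    simp only [ConcreteCategory.coe_comp, Function.comp_apply]
    rfl

lemma homologyMap_conj :
    ShortComplex.homologyMap φ =
      S₁.moduleCatLeftHomologyData.homologyIso.hom ≫ mapH φ ≫
        S₂.moduleCatLeftHomologyData.homologyIso.inv :=
  (myγ φ).homologyMap_eq

lemma mapH_mk (z : LinearMap.ker S₁.g.hom) :
    mapH φ (Submodule.Quotient.mk z) = Submodule.Quotient.mk (mapK φ z) := rfl

lemma mapK_val (z : LinearMap.ker S₁.g.hom) : (mapK φ z : S₂.X₂) = φ.τ₂ z := rfl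

lemma injective_homologyMap_iff_elem :
    Function.Injective (ShortComplex.homologyMap φ) ↔
      ∀ x : S₁.X₂, S₁.g x = 0 → (∃ b : S₂.X₁, S₂.f b = φ.τ₂ x) → ∃ c : S₁.X₁, S₁.f c = x := by
  rw [homologyMap_conj φ, inj_conj]
  constructor
  · intro h x hx hb
    obtain ⟨b, hb⟩ := hb
    have h0 : (mapH φ) (Submodule.Quotient.mk ⟨x, hx⟩) = 0 := by
      rw [mapH_mk]
      show (Submodule.Quotient.mk (mapK φ ⟨x, hx⟩) : (LinearMap.ker S₂.g.hom ⧸ LinearMap.range S₂.moduleCatToCycles)) = 0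
      rw [Submodule.Quotient.mk_eq_zero]
      refine ⟨b, Subtype.ext ?_⟩
      exact hb
    have h1 : (Submodule.Quotient.mk (⟨x, hx⟩ : LinearMap.ker S₁.g.hom)
        : (LinearMap.ker S₁.g.hom ⧸ LinearMap.range S₁.moduleCatToCycles)) = 0 := h (by rw [h0]; exact (map_zero _).symm)
    rw [Submodule.Quotient.mk_eq_zero] at h1
    obtain ⟨c, hc⟩ := h1
    exact ⟨c, congrArg Subtype.val hc⟩
  · intro h
    rw [injective_iff_map_eq_zero]
    intro z hz
    obtain ⟨⟨x, hx⟩, rfl⟩ := Submodule.Quotient.mk_surjective _ z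
    have hz' : (Submodule.Quotient.mk (mapK φ ⟨x, hx⟩) : (LinearMap.ker S₂.g.hom ⧸ LinearMap.range S₂.moduleCatToCycles)) = 0 := hz
    rw [Submodule.Quotient.mk_eq_zero] at hz'
    obtain ⟨b, hb⟩ := hz'
    have hb' : S₂.f b = φ.τ₂ x := by
      exact congrArg Subtype.val hb
    obtain ⟨c, hc⟩ := h x hx ⟨b, hb'⟩
    show (Submodule.Quotient.mk ⟨x, hx⟩ : (LinearMap.ker S₁.g.hom ⧸ LinearMap.range S₁.moduleCatToCycles)) = 0
    rw [Submodule.Quotient.mk_eq_zero]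
    exact ⟨c, Subtype.ext hc⟩

lemma surjective_homologyMap_iff_elem :
    Function.Surjective (ShortComplex.homologyMap φ) ↔
      ∀ y : S₂.X₂, S₂.g y = 0 →
        ∃ x : S₁.X₂, S₁.g x = 0 ∧ ∃ w : S₂.X₁, S₂.f w = φ.τ₂ x - y := by
  rw [homologyMap_conj φ, surj_conj]
  constructor
  · intro h y hy
    obtain ⟨z, hz⟩ := h (Submodule.Quotient.mk ⟨y, hy⟩)
    obtain ⟨⟨x, hx⟩, rfl⟩ := Submodule.Quotient.mk_surjective _ z
    have hz' : (Submodule.Quotient.mk (mapK φ ⟨x, hx⟩) : (LinearMap.ker S₂.g.hom ⧸ LinearMap.range S₂.moduleCatToCycles)) =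
        Submodule.Quotient.mk ⟨y, hy⟩ := hz
    rw [Submodule.Quotient.eq] at hz'
    obtain ⟨w, hw⟩ := hz'
    refine ⟨x, hx, w, ?_⟩
    exact congrArg Subtype.val hw
  · intro h z
    obtain ⟨⟨y, hy⟩, rfl⟩ := Submodule.Quotient.mk_surjective _ z
    obtain ⟨x, hx, w, hw⟩ := h y hy
    refine ⟨Submodule.Quotient.mk ⟨x, hx⟩, ?_⟩
    show (Submodule.Quotient.mk (mapK φ ⟨x, hx⟩) : (LinearMap.ker S₂.g.hom ⧸ LinearMap.range S₂.moduleCatToCycles)) =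
        Submodule.Quotient.mk ⟨y, hy⟩
    rw [Submodule.Quotient.eq]
    exact ⟨w, Subtype.ext hw⟩

end Scratch

namespace Scratch

variable {X Y : ChainComplex (ModuleCat.{u} R) ℤ} (f : X ⟶ Y)

noncomputable def φc (i j k : ℤ) : X.sc' i j k ⟶ Y.sc' i j k :=
  (HomologicalComplex.shortComplexFunctor' (ModuleCat.{u} R) (ComplexShape.down ℤ) i j k).map f

def Hinj (j : ℤ) : Prop :=
  Function.Injective (ShortComplex.homologyMap (φc f (j + 1) j (j - 1)))

def Hsurj (j : ℤ) : Prop :=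
  Function.Surjective (ShortComplex.homologyMap (φc f (j + 1) j (j - 1)))

lemma quasiIsoAt_iff_Hinj_Hsurj (j : ℤ) : QuasiIsoAt f j ↔ Hinj f j ∧ Hsurj f j := by
  rw [quasiIsoAt_iff' f (j + 1) j (j - 1) (ChainComplex.prev ℤ j) (ChainComplex.next ℤ j),
    ShortComplex.quasiIso_iff, ConcreteCategory.isIso_iff_bijective]
  exact Iff.rfl

lemma Hinj_iff (i j k : ℤ) (hi : i = j + 1) (hk : k = j - 1) :
    Hinj f j ↔ ∀ a : X.X j, X.d j k a = 0 →
      (∃ b : Y.X i, Y.d i j b = f.f j a) → ∃ c : X.X i, X.d i j c = a := by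
  subst hi hk
  rw [Hinj, injective_homologyMap_iff_elem]
  exact Iff.rfl

lemma Hsurj_iff (i j k : ℤ) (hi : i = j + 1) (hk : k = j - 1) :
    Hsurj f j ↔ ∀ y : Y.X j, Y.d j k y = 0 →
      ∃ x : X.X j, X.d j k x = 0 ∧ ∃ w : Y.X i, Y.d i j w = f.f j x - y := by
  subst hi hk
  rw [Hsurj, surjective_homologyMap_iff_elem]
  exact Iff.rfl

lemma exists_d_congr (Z : ChainComplex (ModuleCat.{u} R) ℤ) {i i' j : ℤ} (h : i = i')
    (v : Z.X j) : (∃ w : Z.X i, Z.d i j w = v) ↔ ∃ w : Z.X i', Z.d i' j w = v := by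
  subst h; rfl

lemma comm_apply (i j : ℤ) (x : X.X i) : Y.d i j (f.f i x) = f.f j (X.d i j x) := by
  have := congrArg (fun (g : X.X i ⟶ Y.X j) => g x) (f.comm i j)
  simpa only [ConcreteCategory.coe_comp, Function.comp_apply] using this

end Scratch

open Scratch in
/-- A morphism of unbounded chain complexes of `R`-modules is a
quasi-isomorphism iff for every `n`, every `n`-cycle `a` of `X` and every `b ∈ Y_{n+1}` with
`d b = f a`, there are `c ∈ X_{n+1}` with `d c = a` and `e ∈ Y_{n+2}` with `d e = f c - b`. -/
theorem quasiIso_iff_lifting_condition {R : Type u} [CommRing R]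
    {X Y : ChainComplex (ModuleCat.{u} R) ℤ} (f : X ⟶ Y) :
    QuasiIso f ↔
      ∀ (n : ℤ) (a : X.X n), X.d n (n - 1) a = 0 →
        ∀ b : Y.X (n + 1), Y.d (n + 1) n b = f.f n a →
          ∃ c : X.X (n + 1), X.d (n + 1) n c = a ∧
            ∃ e : Y.X (n + 2), Y.d (n + 2) (n + 1) e = f.f (n + 1) c - b := by
  rw [quasiIso_iff]
  constructor
  · intro hq n a ha b hb
    have hinj := ((quasiIsoAt_iff_Hinj_Hsurj f n).1 (hq n)).1
    have hsurj := ((quasiIsoAt_iff_Hinj_Hsurj f (n + 1)).1 (hq (n + 1))).2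
    rw [Hinj_iff f (n + 1) n (n - 1) rfl rfl] at hinj
    rw [Hsurj_iff f (n + 2) (n + 1) n (by omega) (by omega)] at hsurj
    obtain ⟨c₀, hc₀⟩ := hinj a ha ⟨b, hb⟩
    have hv : Y.d (n + 1) n (f.f (n + 1) c₀ - b) = 0 := by
      rw [map_sub, comm_apply, hc₀, hb, sub_self]
    obtain ⟨x, hx, w, hw⟩ := hsurj _ hv
    refine ⟨c₀ - x, by rw [map_sub, hc₀, hx, sub_zero], -w, ?_⟩
    rw [map_neg, hw, map_sub]
    abel
  · intro h m
    rw [quasiIsoAt_iff_Hinj_Hsurj]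
    constructor
    · rw [Hinj_iff f (m + 1) m (m - 1) rfl rfl]
      intro a ha hb
      obtain ⟨b, hb⟩ := hb
      obtain ⟨c, hc, -⟩ := h m a ha b hb
      exact ⟨c, hc⟩
    · obtain ⟨p, rfl⟩ : ∃ p, m = p + 1 := ⟨m - 1, by omega⟩
      rw [Hsurj_iff f (p + 1 + 1) (p + 1) p rfl (by omega)]
      intro y hy
      obtain ⟨c, hc, e, he⟩ := h p 0 (by simp) (-y) (by rw [map_neg, hy, neg_zero, map_zero])
      refine ⟨-c, by rw [map_neg, hc, neg_zero], ?_⟩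
      rw [← exists_d_congr Y (show p + 2 = p + 1 + 1 by omega)]
      refine ⟨-e, ?_⟩
      rw [map_neg, he, map_neg]
      abel
end

section
/- There exists a monad T on the arrow category of Cat (the category of small categories and functors) such that an object F of the arrow category (i.e., a functor F : A ⥤ B between small categories) admits a T-algebra structure if and only if F is an equivalence of categories. -/
open CategoryTheory

universe u
namespace MonadDetect

@[reducible] def smap {α β γ δ : Type u} (f : α → γ) (g : β → δ) : α ⊕ β → γ ⊕ δ :=
  fun x => match x with
  | .inl a => .inl (f a)
  | .inr b => .inr (g b)

@[reducible] def selim {α β γ : Type u} (f : α → γ) (g : β → γ) : α ⊕ β → γ :=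
  fun x => match x with
  | .inl a => f a
  | .inr b => g b

section helpers
variable {X : Type u} {C : Type u} {D : Type u} [Category.{u} C] [Category.{u} D]

/-- Functor between induced categories from an index map and a base functor. -/
@[reducible] def IndMap {Y : Type u} (πX : X → C) (πY : Y → D) (q : C ⥤ D) (φ : X → Y)
    (h : ∀ x, πY (φ x) = q.obj (πX x)) :
    InducedCategory C πX ⥤ InducedCategory D πY where
  obj x := φ x
  map {x y} v := InducedCategory.homMk (eqToHom (h x) ≫ q.map v.hom ≫ eqToHom (h y).symm)
  map_id x := by
    ext
    simp
  map_comp {x y z} v w := by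
    ext
    simp

@[simp] lemma IndMap_obj {Y : Type u} (πX : X → C) (πY : Y → D) (q : C ⥤ D) (φ : X → Y)
    (h : ∀ x, πY (φ x) = q.obj (πX x)) (x : InducedCategory C πX) :
    (IndMap πX πY q φ h).obj x = φ x := rfl

@[simp] lemma IndMap_map {Y : Type u} (πX : X → C) (πY : Y → D) (q : C ⥤ D) (φ : X → Y)
    (h : ∀ x, πY (φ x) = q.obj (πX x)) {x y : InducedCategory C πX} (v : x ⟶ y) :
    (IndMap πX πY q φ h).map v =
      InducedCategory.homMk (eqToHom (h x) ≫ q.map v.hom ≫ eqToHom (h y).symm) := rfl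

lemma IndMap_ext {Y : Type u} (πX : X → C) (πY : Y → D) {q q' : C ⥤ D} {φ φ' : X → Y}
    (h : ∀ x, πY (φ x) = q.obj (πX x)) (h' : ∀ x, πY (φ' x) = q'.obj (πX x))
    (hq : q = q') (hφ : ∀ x, φ x = φ' x) :
    IndMap πX πY q φ h = IndMap πX πY q' φ' h' := by
  subst hq
  have hφ' : φ = φ' := funext hφ
  subst hφ'
  rfl

lemma IndMap_comp {Y Z : Type u} {E : Type u} [Category.{u} E]
    (πX : X → C) (πY : Y → D) (πZ : Z → E) (q : C ⥤ D) (q' : D ⥤ E)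
    (φ : X → Y) (φ' : Y → Z)
    (h : ∀ x, πY (φ x) = q.obj (πX x)) (h' : ∀ y, πZ (φ' y) = q'.obj (πY y)) :
    IndMap πX πY q φ h ⋙ IndMap πY πZ q' φ' h' =
      IndMap πX πZ (q ⋙ q') (fun x => φ' (φ x))
        (fun x => (h' (φ x)).trans (by rw [h x]; rfl)) := by
  refine CategoryTheory.Functor.ext (fun x => rfl) (fun x y v => ?_)
  ext
  simp [IndMap, eqToHom_map, InducedCategory.eqToHom_hom]

/-- A functor out of an induced category, via a fully faithful functor and correcting isos. -/
@[reducible] def LiftInd {AA : Type u} [Category.{u} AA] {π : X → C} {K : AA ⥤ C} (hK : K.FullyFaithful)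
    (o : X → AA) (κ : ∀ x, K.obj (o x) ≅ π x) :
    InducedCategory C π ⥤ AA where
  obj x := o x
  map {x y} v := hK.preimage ((κ x).hom ≫ v.hom ≫ (κ y).inv)
  map_id x := by
    apply hK.map_injective
    simp
  map_comp {x y z} v w := by
    apply hK.map_injective
    simp

@[simp] lemma LiftInd_obj {AA : Type u} [Category.{u} AA] {π : X → C} {K : AA ⥤ C}
    (hK : K.FullyFaithful) (o : X → AA) (κ : ∀ x, K.obj (o x) ≅ π x)
    (x : InducedCategory C π) :
    (LiftInd hK o κ).obj x = o x := rfl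

@[simp] lemma LiftInd_map {AA : Type u} [Category.{u} AA] {π : X → C} {K : AA ⥤ C}
    (hK : K.FullyFaithful) (o : X → AA) (κ : ∀ x, K.obj (o x) ≅ π x)
    {x y : InducedCategory C π} (v : x ⟶ y) :
    (LiftInd hK o κ).map v = hK.preimage ((κ x).hom ≫ v.hom ≫ (κ y).inv) := rfl

end helpers

/-! ### The categories `DCat F` and `ECat B` -/

@[reducible] def Epi (B : Cat.{u,u}) : ((B : Type u) ⊕ (B : Type u)) → (B : Type u) := fun x => match x with
  | .inl b => b
  | .inr b => b

abbrev ECat (B : Cat.{u,u}) : Cat.{u,u} := ⟨InducedCategory (B : Type u) (Epi B), inferInstance⟩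

variable {A B : Cat.{u,u}}

@[reducible] def Dpi (F : (A : Type u) ⥤ (B : Type u)) : ((A : Type u) ⊕ (B : Type u)) → (B : Type u) :=
  fun x => match x with
  | .inl a => F.obj a
  | .inr b => b

abbrev DCat {A B : Cat.{u,u}} (F : (A : Type u) ⥤ (B : Type u)) : Cat.{u,u} :=
  ⟨InducedCategory (B : Type u) (Dpi F), inferInstance⟩

@[reducible] def homArr {A B : Cat.{u,u}} (F : (A : Type u) ⥤ (B : Type u)) :
    (DCat F : Type u) ⥤ (ECat B : Type u) :=
  IndMap (Dpi F) (Epi B) (𝟭 (B : Type u)) (smap F.obj id) (by rintro (a | b) <;> rfl)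

/-- The object part of the monad. -/
@[reducible] def Tobj (F : Arrow Cat.{u,u}) : Arrow Cat.{u,u} :=
  Arrow.mk (show DCat F.hom.toFunctor ⟶ ECat F.right from (homArr F.hom.toFunctor).toCatHom)

lemma wF {F G : Arrow Cat.{u,u}} (f : F ⟶ G) :
    f.left.toFunctor ⋙ G.hom.toFunctor = F.hom.toFunctor ⋙ f.right.toFunctor :=
  congrArg Cat.Hom.toFunctor (Arrow.w f)

@[reducible] def DmapL {F G : Arrow Cat.{u,u}} (f : F ⟶ G) :
    (DCat F.hom.toFunctor : Type u) ⥤ (DCat G.hom.toFunctor : Type u) :=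
  IndMap (Dpi F.hom.toFunctor) (Dpi G.hom.toFunctor) f.right.toFunctor
    (smap f.left.toFunctor.obj f.right.toFunctor.obj)
    (by
      rintro (a | b)
      · exact Functor.congr_obj (wF f) a
      · rfl)

@[reducible] def Emap {B B' : Cat.{u,u}} (q : (B : Type u) ⥤ (B' : Type u)) :
    (ECat B : Type u) ⥤ (ECat B' : Type u) :=
  IndMap (Epi B) (Epi B') q (smap q.obj q.obj) (by rintro (b | b) <;> rfl)

lemma Tmap_w {F G : Arrow Cat.{u,u}} (f : F ⟶ G) :
    DmapL f ⋙ homArr G.hom.toFunctor = homArr F.hom.toFunctor ⋙ Emap f.right.toFunctor := by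
  unfold DmapL homArr Emap
  rw [IndMap_comp, IndMap_comp]
  apply IndMap_ext
  · exact (Functor.comp_id _).trans (Functor.id_comp _).symm
  · rintro (a | b)
    · exact congrArg Sum.inl (Functor.congr_obj (wF f) a)
    · rfl

/-- The morphism part of the monad. -/
def Tmap {F G : Arrow Cat.{u,u}} (f : F ⟶ G) : Tobj F ⟶ Tobj G :=
  Arrow.homMk (u := show DCat F.hom.toFunctor ⟶ DCat G.hom.toFunctor from (DmapL f).toCatHom)
    (v := show ECat F.right ⟶ ECat G.right from (Emap f.right.toFunctor).toCatHom)
    (Cat.ext (Tmap_w f))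

def Tfun : Arrow Cat.{u,u} ⥤ Arrow Cat.{u,u} where
  obj := Tobj
  map := Tmap
  map_id F := by
    ext
    · show DmapL (𝟙 F) = 𝟭 (DCat F.hom.toFunctor : Type u)
      refine CategoryTheory.Functor.ext ?_ ?_
      · rintro (a | b) <;> rfl
      · rintro (a | b) (a' | b') v <;>
          (apply InducedCategory.hom_ext; simp [DmapL, IndMap_map, Comma.id_right, Cat.Hom.id_map] <;> erw [InducedCategory.eqToHom_hom, InducedCategory.eqToHom_hom] <;> simp <;>
            erw [eqToHom_refl, Category.id_comp])
    · show Emap (𝟙 F.right : F.right ⟶ F.right).toFunctor = 𝟭 (ECat F.right : Type u)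
      refine CategoryTheory.Functor.ext ?_ ?_
      · rintro (b | b) <;> rfl
      · rintro (b | b) (b' | b') v <;>
          (apply InducedCategory.hom_ext; simp [Emap, IndMap_map])
  map_comp {F G H} f g := by
    ext
    · show DmapL (f ≫ g) = DmapL f ⋙ DmapL g
      unfold DmapL
      rw [IndMap_comp]
      apply IndMap_ext
      · rfl
      · rintro (a | b) <;> rfl
    · show Emap (f ≫ g).right.toFunctor = Emap f.right.toFunctor ⋙ Emap g.right.toFunctor
      unfold Emap
      rw [IndMap_comp]
      apply IndMap_ext
      · rfl
      · rintro (b | b) <;> rfl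


/-! ### Unit -/

@[reducible] def inlD {A B : Cat.{u,u}} (F : (A : Type u) ⥤ (B : Type u)) : (A : Type u) ⥤ (DCat F : Type u) where
  obj a := Sum.inl a
  map {a a'} f := InducedCategory.homMk (show Dpi F (Sum.inl a) ⟶ Dpi F (Sum.inl a') from F.map f)
  map_id a := InducedCategory.hom_ext (F.map_id a)
  map_comp f g := InducedCategory.hom_ext (F.map_comp f g)

@[reducible] def inlE (B : Cat.{u,u}) : (B : Type u) ⥤ (ECat B : Type u) where
  obj b := Sum.inl b
  map {b b'} u := InducedCategory.homMk (show Epi B (Sum.inl b) ⟶ Epi B (Sum.inl b') from u)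
  map_id _ := rfl
  map_comp _ _ := rfl

@[reducible] def inrE (B : Cat.{u,u}) : (B : Type u) ⥤ (ECat B : Type u) where
  obj b := Sum.inr b
  map {b b'} u := InducedCategory.homMk (show Epi B (Sum.inr b) ⟶ Epi B (Sum.inr b') from u)
  map_id _ := rfl
  map_comp _ _ := rfl

@[reducible] def inrD {A B : Cat.{u,u}} (F : (A : Type u) ⥤ (B : Type u)) :
    (B : Type u) ⥤ (DCat F : Type u) where
  obj b := Sum.inr b
  map {b b'} u := InducedCategory.homMk (show Dpi F (Sum.inr b) ⟶ Dpi F (Sum.inr b') from u)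
  map_id _ := rfl
  map_comp _ _ := rfl

lemma eta_w (F : Arrow Cat.{u,u}) :
    inlD F.hom.toFunctor ⋙ homArr F.hom.toFunctor = F.hom.toFunctor ⋙ inlE F.right := by
  refine CategoryTheory.Functor.ext (fun a => rfl) (fun a a' f => ?_)
  show (homArr F.hom.toFunctor).map ((inlD F.hom.toFunctor).map f) = _
  ext
  simp [homArr, IndMap_map, inlD, inlE]

def ηapp (F : Arrow Cat.{u,u}) : F ⟶ Tobj F :=
  Arrow.homMk (u := show F.left ⟶ DCat F.hom.toFunctor from (inlD F.hom.toFunctor).toCatHom)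
    (v := show F.right ⟶ ECat F.right from (inlE F.right).toCatHom) (Cat.ext (eta_w F))

/-! ### Multiplication -/

@[reducible] def muL {A B : Cat.{u,u}} (F : (A : Type u) ⥤ (B : Type u)) :
    (DCat (homArr F) : Type u) ⥤ (DCat F : Type u) :=
  IndMap (Dpi (homArr F)) (Dpi F) (inducedFunctor (Epi B))
    (selim id (fun e => Sum.inr (Epi B e)))
    (by rintro ((a | b) | (b | b)) <;> rfl)

@[reducible] def muR (B : Cat.{u,u}) : (ECat (ECat B) : Type u) ⥤ (ECat B : Type u) :=
  IndMap (Epi (ECat B)) (Epi B) (inducedFunctor (Epi B))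
    (selim id (fun e => Sum.inr (Epi B e)))
    (by rintro ((b | b) | (b | b)) <;> rfl)

lemma mu_w {A B : Cat.{u,u}} (F : (A : Type u) ⥤ (B : Type u)) :
    muL F ⋙ homArr F = homArr (homArr F) ⋙ muR B := by
  unfold muL homArr muR
  rw [IndMap_comp, IndMap_comp]
  apply IndMap_ext
  · exact (Functor.comp_id _).trans (Functor.id_comp _).symm
  · rintro ((a | b) | (b | b)) <;> rfl

def μapp (F : Arrow Cat.{u,u}) : Tobj (Tobj F) ⟶ Tobj F :=
  Arrow.homMk (u := show DCat (Tobj F).hom.toFunctor ⟶ DCat F.hom.toFunctor from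
      (muL F.hom.toFunctor).toCatHom)
    (v := show ECat (Tobj F).right ⟶ ECat F.right from (muR F.right).toCatHom)
    (Cat.ext (mu_w F.hom.toFunctor))


/-! ### Naturality -/

@[simp] lemma Tobj_hom (F : Arrow Cat.{u,u}) :
    (Tobj F).hom.toFunctor = homArr F.hom.toFunctor := rfl
@[simp] lemma Tmap_left {F G : Arrow Cat.{u,u}} (f : F ⟶ G) :
    (Tmap f).left.toFunctor = DmapL f := rfl
@[simp] lemma Tmap_right {F G : Arrow Cat.{u,u}} (f : F ⟶ G) :
    (Tmap f).right.toFunctor = Emap f.right.toFunctor := rfl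

lemma Emap_forget {B B' : Cat.{u,u}} (q : (B : Type u) ⥤ (B' : Type u)) :
    Emap q ⋙ inducedFunctor (Epi B') = inducedFunctor (Epi B) ⋙ q := by
  refine CategoryTheory.Functor.ext ?_ ?_
  · rintro (b | b) <;> rfl
  · rintro (b | b) (b' | b') v <;> simp [Emap, IndMap_map, inducedFunctor]

lemma eta_nat {F G : Arrow Cat.{u,u}} (f : F ⟶ G) :
    f ≫ ηapp G = ηapp F ≫ Tmap f := by
  ext
  · show f.left.toFunctor ⋙ inlD G.hom.toFunctor = inlD F.hom.toFunctor ⋙ DmapL f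
    refine CategoryTheory.Functor.ext (fun a => rfl) (fun a a' φ => ?_)
    show (inlD G.hom.toFunctor).map (f.left.toFunctor.map φ) = _
    have h := Functor.congr_hom (wF f) φ
    ext
    simp only [inlD, DmapL, IndMap_map, Functor.comp_map]
    simpa using h
  · show f.right.toFunctor ⋙ inlE G.right = inlE F.right ⋙ Emap f.right.toFunctor
    refine CategoryTheory.Functor.ext (fun b => rfl) (fun b b' u => ?_)
    show (inlE G.right).map (f.right.toFunctor.map u) = _
    ext
    simp [inlE, Emap, IndMap_map]

lemma mu_nat {F G : Arrow Cat.{u,u}} (f : F ⟶ G) :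
    Tmap (Tmap f) ≫ μapp G = μapp F ≫ Tmap f := by
  ext
  · show DmapL (Tmap f) ⋙ muL G.hom.toFunctor = muL F.hom.toFunctor ⋙ DmapL f
    unfold DmapL muL
    simp only [Tobj_hom, Tmap_left, Tmap_right]
    rw [IndMap_comp, IndMap_comp]
    apply IndMap_ext
    · exact Emap_forget f.right.toFunctor
    · rintro ((a | b) | (b | b)) <;> rfl
  · show Emap (Emap f.right.toFunctor) ⋙ muR G.right = muR F.right ⋙ Emap f.right.toFunctor
    unfold Emap muR
    rw [IndMap_comp, IndMap_comp]
    apply IndMap_ext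
    · exact Emap_forget f.right.toFunctor
    · rintro ((b | b) | (b | b)) <;> rfl


@[simp] lemma μapp_left (F : Arrow Cat.{u,u}) :
    (μapp F).left.toFunctor = muL F.hom.toFunctor := rfl
@[simp] lemma μapp_right (F : Arrow Cat.{u,u}) : (μapp F).right.toFunctor = muR F.right := rfl
@[simp] lemma ηapp_left (F : Arrow Cat.{u,u}) :
    (ηapp F).left.toFunctor = inlD F.hom.toFunctor := rfl
@[simp] lemma ηapp_right (F : Arrow Cat.{u,u}) : (ηapp F).right.toFunctor = inlE F.right := rfl

lemma muR_forget (B : Cat.{u,u}) :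
    muR B ⋙ inducedFunctor (Epi B) = inducedFunctor (Epi (ECat B)) ⋙ inducedFunctor (Epi B) := by
  refine CategoryTheory.Functor.ext ?_ ?_
  · rintro (e | e) <;> rfl
  · rintro ((b | b) | (b | b)) ((b' | b') | (b' | b')) v <;>
      simp [muR, IndMap_map, inducedFunctor]

lemma m_assoc (F : Arrow Cat.{u,u}) :
    Tmap (μapp F) ≫ μapp F = μapp (Tobj F) ≫ μapp F := by
  ext
  · show DmapL (μapp F) ⋙ muL F.hom.toFunctor = muL (Tobj F).hom.toFunctor ⋙ muL F.hom.toFunctor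
    unfold DmapL muL
    simp only [Tobj_hom, μapp_left, μapp_right]
    rw [IndMap_comp, IndMap_comp]
    apply IndMap_ext
    · exact muR_forget F.right
    · rintro (((a | b) | (b | b)) | ((b | b) | (b | b))) <;> rfl
  · show Emap (muR F.right) ⋙ muR F.right = muR (ECat F.right) ⋙ muR F.right
    unfold Emap muR
    rw [IndMap_comp, IndMap_comp]
    apply IndMap_ext
    · exact muR_forget F.right
    · rintro (((b | b) | (b | b)) | ((b | b) | (b | b))) <;> rfl

lemma m_left_unit (F : Arrow Cat.{u,u}) : ηapp (Tobj F) ≫ μapp F = 𝟙 (Tobj F) := by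
  ext
  · show inlD (Tobj F).hom.toFunctor ⋙ muL F.hom.toFunctor = 𝟭 (DCat F.hom.toFunctor : Type u)
    refine CategoryTheory.Functor.ext (fun x => rfl) ?_
    rintro (a | b) (a' | b') v <;>
      (apply InducedCategory.hom_ext; simp [inlD, muL, homArr, IndMap_map, inducedFunctor])
  · show inlE (ECat F.right) ⋙ muR F.right = 𝟭 (ECat F.right : Type u)
    refine CategoryTheory.Functor.ext (fun x => rfl) ?_
    rintro (b | b) (b' | b') v <;>
      (apply InducedCategory.hom_ext; simp [inlE, muR, IndMap_map, inducedFunctor])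

lemma m_right_unit (F : Arrow Cat.{u,u}) : Tmap (ηapp F) ≫ μapp F = 𝟙 (Tobj F) := by
  ext
  · show DmapL (ηapp F) ⋙ muL F.hom.toFunctor = 𝟭 (DCat F.hom.toFunctor : Type u)
    refine CategoryTheory.Functor.ext ?_ ?_
    · rintro (a | b) <;> simp
    · rintro (a | b) (a' | b') v <;>
        (apply InducedCategory.hom_ext; simp [DmapL, muL, inlE, IndMap_map, inducedFunctor] <;> erw [InducedCategory.eqToHom_hom] <;> simp <;>
          erw [InducedCategory.comp_hom, InducedCategory.eqToHom_hom, eqToHom_refl, Category.id_comp,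
            InducedCategory.homMk_hom])
  · show Emap (ηapp F).right.toFunctor ⋙ muR F.right = 𝟭 (ECat F.right : Type u)
    refine CategoryTheory.Functor.ext ?_ ?_
    · rintro (b | b) <;> simp
    · rintro (b | b) (b' | b') v <;>
        (apply InducedCategory.hom_ext; simp [Emap, muR, inlE, IndMap_map, inducedFunctor] <;> erw [InducedCategory.eqToHom_hom] <;> simp)

/-- The monad. -/
def TheMonad : Monad (Arrow Cat.{u,u}) where
  toFunctor := Tfun
  η := { app := ηapp, naturality := fun F G f => by dsimp; exact eta_nat f }
  μ := { app := μapp, naturality := fun F G f => by dsimp; exact mu_nat f }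
  assoc := m_assoc
  left_unit := m_left_unit
  right_unit := m_right_unit


/-! ### Algebra structure implies equivalence -/

section Forward

variable {F : Arrow Cat.{u,u}} (a : Tobj F ⟶ F)

lemma forward (hunit : ηapp F ≫ a = 𝟙 F) : F.hom.toFunctor.IsEquivalence := by
  have hL : inlD F.hom.toFunctor ⋙ a.left.toFunctor = 𝟭 (F.left : Type u) :=
    congrArg (fun g => g.left.toFunctor) hunit
  have hR : inlE F.right ⋙ a.right.toFunctor = 𝟭 (F.right : Type u) :=
    congrArg (fun g => g.right.toFunctor) hunit
  have hw : a.left.toFunctor ⋙ F.hom.toFunctor = homArr F.hom.toFunctor ⋙ a.right.toFunctor :=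
    congrArg Cat.Hom.toFunctor (Arrow.w a)
  have faithful : F.hom.toFunctor.Faithful := by
    constructor
    intro x y f f' h
    have h2 : (inlD F.hom.toFunctor).map f = (inlD F.hom.toFunctor).map f' :=
      InducedCategory.hom_ext h
    have e1 := Functor.congr_hom hL f
    have e2 := Functor.congr_hom hL f'
    simp only [Functor.comp_map, Functor.id_map] at e1 e2
    have : eqToHom (Functor.congr_obj hL x) ≫ f ≫ eqToHom (Functor.congr_obj hL y).symm =
        eqToHom (Functor.congr_obj hL x) ≫ f' ≫ eqToHom (Functor.congr_obj hL y).symm := by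
      rw [← e1, ← e2, h]
    exact (cancel_mono (eqToHom (Functor.congr_obj hL y).symm)).1
      ((cancel_epi (eqToHom (Functor.congr_obj hL x))).1 this)
  have full : F.hom.toFunctor.Full := by
    constructor
    intro x y v
    set vhat : (inlD F.hom.toFunctor).obj x ⟶ (inlD F.hom.toFunctor).obj y :=
      InducedCategory.homMk
        (show Dpi F.hom.toFunctor (Sum.inl x) ⟶ Dpi F.hom.toFunctor (Sum.inl y) from v) with hvhat
    refine ⟨eqToHom (Functor.congr_obj hL x).symm ≫
      a.left.toFunctor.map vhat ≫ eqToHom (Functor.congr_obj hL y), ?_⟩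
    have e3 := Functor.congr_hom hw vhat
    rw [Functor.comp_map, Functor.comp_map] at e3
    have e5 : (homArr F.hom.toFunctor).map vhat = (inlE F.right).map v := by
      ext
      simp [inlE, homArr, IndMap, hvhat]
    have e4 := Functor.congr_hom hR v
    simp only [Functor.comp_map, Functor.id_map] at e4
    rw [e5, e4] at e3
    simp only [Functor.map_comp, eqToHom_map, e3]
    simp
  have essSurj : F.hom.toFunctor.EssSurj := by
    constructor
    intro b
    refine ⟨a.left.toFunctor.obj ((inrD F.hom.toFunctor).obj b), ⟨?_⟩⟩
    have hob : F.hom.toFunctor.obj (a.left.toFunctor.obj ((inrD F.hom.toFunctor).obj b)) =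
        a.right.toFunctor.obj ((inrE F.right).obj b) :=
      Functor.congr_obj hw ((inrD F.hom.toFunctor).obj b)
    have hob2 : a.right.toFunctor.obj ((inlE F.right).obj b) = b := Functor.congr_obj hR b
    have i : (inlE F.right).obj b ≅ (inrE F.right).obj b :=
      InducedCategory.isoMk (Iso.refl b)
    exact eqToIso hob ≪≫ (a.right.toFunctor.mapIso i).symm ≪≫ eqToIso hob2
  exact ⟨faithful, full, essSurj⟩

end Forward


/-! ### Equivalence gives an algebra structure -/

section Backward

variable {A B : Cat.{u,u}} (Φ : (A : Type u) ⥤ (B : Type u)) [Φ.Full] [Φ.Faithful] [Φ.EssSurj]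

noncomputable def repB (b : (B : Type u)) : (B : Type u) :=
  Quotient.out (Quotient.mk (isIsomorphicSetoid (B : Type u)) b)

lemma repB_iso (b : (B : Type u)) : Nonempty (repB (B := B) b ≅ b) :=
  @Quotient.mk_out _ (isIsomorphicSetoid (B : Type u)) b

lemma repB_eq_of_iso {b b' : (B : Type u)} (h : Nonempty (b ≅ b')) :
    repB (B := B) b = repB (B := B) b' :=
  congrArg Quotient.out (@Quotient.sound _ (isIsomorphicSetoid (B : Type u)) _ _ h)

noncomputable def gob (b : (B : Type u)) : (A : Type u) := Φ.objPreimage (repB (B := B) b)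

lemma gob_norm (b : (B : Type u)) : gob Φ (Φ.obj (gob Φ b)) = gob Φ b := by
  unfold gob
  congr 1
  apply repB_eq_of_iso
  exact ⟨(Φ.objObjPreimageIso (repB (B := B) b)) ≪≫
    Classical.choice (repB_iso (B := B) b)⟩

noncomputable def epsIso (b : (B : Type u)) : b ≅ Φ.obj (gob Φ b) :=
  @dite _ (b = Φ.obj (gob Φ b)) (Classical.dec _) (fun h => eqToIso h)
    (fun _ => (Classical.choice (repB_iso (B := B) b)).symm ≪≫ (Φ.objObjPreimageIso _).symm)

lemma eps_norm (b : (B : Type u)) :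
    epsIso Φ (Φ.obj (gob Φ b)) = eqToIso (congrArg Φ.obj (gob_norm Φ b)).symm := by
  have h : Φ.obj (gob Φ b) = Φ.obj (gob Φ (Φ.obj (gob Φ b))) :=
    (congrArg Φ.obj (gob_norm Φ b)).symm
  unfold epsIso
  rw [dif_pos h]

variable (hFF : Φ.FullyFaithful)

@[reducible] noncomputable def algL : (DCat Φ : Type u) ⥤ (A : Type u) :=
  LiftInd hFF (selim id (gob Φ))
    (fun x => match x with
      | .inl _ => Iso.refl _
      | .inr b => (epsIso Φ b).symm)

@[reducible] noncomputable def algR : (ECat B : Type u) ⥤ (B : Type u) :=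
  LiftInd (Functor.FullyFaithful.id (B : Type u))
    (selim id (fun b => Φ.obj (gob Φ b)))
    (fun e => match e with
      | .inl _ => Iso.refl _
      | .inr b => (epsIso Φ b).symm)

lemma alg_w : algL Φ hFF ⋙ Φ = homArr Φ ⋙ algR Φ := by
  refine CategoryTheory.Functor.ext ?_ ?_
  · rintro (a | b) <;> rfl
  · rintro (x | x) (y | y) v
    all_goals
      show Φ.map ((algL Φ hFF).map v) = _
      rw [show Φ.map ((algL Φ hFF).map v) = _ from hFF.map_preimage _]
    all_goals simp [algR, homArr, IndMap_map]


lemma alg_unit_L : inlD Φ ⋙ algL Φ hFF = 𝟭 (A : Type u) := by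
  refine CategoryTheory.Functor.ext (fun a => rfl) (fun a a' f => ?_)
  show (algL Φ hFF).map ((inlD Φ).map f) = _
  simp [algL, inlD, Dpi]

lemma alg_unit_R : inlE B ⋙ algR Φ = 𝟭 (B : Type u) := by
  refine CategoryTheory.Functor.ext (fun b => rfl) (fun b b' f => ?_)
  show (algR Φ).map ((inlE B).map f) = _
  simp [algR, inlE, Epi]

lemma alg_mu_L
    (h : ∀ x, Dpi Φ ((smap (algL Φ hFF).obj (algR Φ).obj) x) =
      (algR Φ).obj (Dpi (homArr Φ) x)) :
    muL Φ ⋙ algL Φ hFF =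
      IndMap (Dpi (homArr Φ)) (Dpi Φ) (algR Φ)
        (smap (algL Φ hFF).obj (algR Φ).obj) h ⋙ algL Φ hFF := by
  refine CategoryTheory.Functor.ext ?_ ?_
  · rintro ((a | b) | (b | b))
    · rfl
    · rfl
    · rfl
    · exact (gob_norm Φ b).symm
  · rintro ((x | x) | (x | x)) ((y | y) | (y | y)) v <;>
      (apply hFF.map_injective;
       simp [muL, algL, algR, homArr, IndMap_map, eqToHom_map, eps_norm, gob_norm, Dpi, Epi])

lemma alg_mu_R
    (h : ∀ x, Epi B ((smap (algR Φ).obj (algR Φ).obj) x) =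
      (algR Φ).obj (Epi (ECat B) x)) :
    muR B ⋙ algR Φ =
      IndMap (Epi (ECat B)) (Epi B) (algR Φ)
        (smap (algR Φ).obj (algR Φ).obj) h ⋙ algR Φ := by
  refine CategoryTheory.Functor.ext ?_ ?_
  · rintro ((b | b) | (b | b))
    · rfl
    · rfl
    · rfl
    · exact (congrArg Φ.obj (gob_norm Φ b)).symm
  · rintro ((x | x) | (x | x)) ((y | y) | (y | y)) v <;>
      simp [muR, algR, IndMap_map, eqToHom_map, eps_norm, gob_norm, Dpi, Epi]

end Backward

end MonadDetect

open MonadDetect in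
/-- There is a monad on the arrow category of `Cat` (the category of small
categories) such that an object (a functor between small categories) admits a `T`-algebra
structure if and only if it is an equivalence of categories. -/
theorem exists_monad_detecting_equivalences :
    ∃ T : Monad (Arrow Cat.{u, u}),
      ∀ F : Arrow Cat.{u, u},
        (∃ a : T.obj F ⟶ F,
          T.η.app F ≫ a = 𝟙 F ∧ T.μ.app F ≫ a = T.map a ≫ a) ↔ F.hom.toFunctor.IsEquivalence := by
  refine ⟨TheMonad, fun F => ⟨?_, ?_⟩⟩
  · rintro ⟨a, h1, _⟩
    exact forward a h1
  · intro hE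
    haveI : F.hom.toFunctor.Full := hE.full
    haveI : F.hom.toFunctor.Faithful := hE.faithful
    haveI : F.hom.toFunctor.EssSurj := hE.essSurj
    let hFF : F.hom.toFunctor.FullyFaithful := Functor.FullyFaithful.ofFullyFaithful F.hom.toFunctor
    refine ⟨Arrow.homMk
      (u := show (TheMonad.obj F).left ⟶ F.left from (algL F.hom.toFunctor hFF).toCatHom)
      (v := show (TheMonad.obj F).right ⟶ F.right from (algR F.hom.toFunctor).toCatHom)
      (Cat.ext (alg_w F.hom.toFunctor hFF)), ?_, ?_⟩
    · ext
      · show inlD F.hom.toFunctor ⋙ algL F.hom.toFunctor hFF = 𝟭 (F.left : Type u)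
        exact alg_unit_L F.hom.toFunctor hFF
      · show inlE F.right ⋙ algR F.hom.toFunctor = 𝟭 (F.right : Type u)
        exact alg_unit_R F.hom.toFunctor
    · ext
      · show muL F.hom.toFunctor ⋙ algL F.hom.toFunctor hFF =
          IndMap (Dpi (homArr F.hom.toFunctor)) (Dpi F.hom.toFunctor) (algR F.hom.toFunctor)
            (smap (algL F.hom.toFunctor hFF).obj (algR F.hom.toFunctor).obj) ?_ ⋙ algL F.hom.toFunctor hFF
        exact alg_mu_L F.hom.toFunctor hFF _
      · show muR F.right ⋙ algR F.hom.toFunctor =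
          IndMap (Epi (ECat F.right)) (Epi F.right) (algR F.hom.toFunctor)
            (smap (algR F.hom.toFunctor).obj (algR F.hom.toFunctor).obj) ?_ ⋙ algR F.hom.toFunctor
        exact alg_mu_R F.hom.toFunctor _
end

section
/- Let C be a category with pushouts and let j : n ⟶ m be a morphism of C. Form the pushout m ∪_n m of j along itself, with coprojections u, v : m ⟶ m ∪_n m, and consider the morphism (j, u) : j ⟶ v in the arrow category Arr(C) (the commutative square with top j, left j, right v and bottom u). Then a morphism f : A ⟶ B of C, viewed as an object of Arr(C), is injective with respect to (j, u) if and only if for every commutative square f ∘ r = s ∘ j (with r : n ⟶ A, s : m ⟶ B) there exists d : m ⟶ A with d ∘ j = r. -/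
open CategoryTheory CategoryTheory.Limits

/-- For `j : n ⟶ m` and the pushout `m ∪_n m` of `j` along itself with
coprojections `u = pushout.inl` and `v = pushout.inr`, a morphism `f : A ⟶ B`, viewed as an
object of the arrow category, is injective with respect to the square `(j, u) : j ⟶ v` if and
only if every commutative square `r ≫ f = j ≫ s` admits a diagonal `d : m ⟶ A` with
`j ≫ d = r`. -/
theorem injective_wrt_pushout_square_iff_pure_lifting {C : Type u} [Category.{v} C]
    [HasPushouts C] {n m A B : C} (j : n ⟶ m) (f : A ⟶ B) :
    (∀ sq : Arrow.mk j ⟶ Arrow.mk f,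
        ∃ t : Arrow.mk (pushout.inr j j) ⟶ Arrow.mk f,
          (Arrow.homMk' (u := j) (v := pushout.inl j j)
              (pushout.condition.symm) : Arrow.mk j ⟶ Arrow.mk (pushout.inr j j)) ≫ t = sq) ↔
      ∀ (r : n ⟶ A) (s : m ⟶ B), r ≫ f = j ≫ s → ∃ d : m ⟶ A, j ≫ d = r := by
  constructor
  · intro h r s w
    obtain ⟨t, ht⟩ := h (Arrow.homMk' (u := r) (v := s) w)
    refine ⟨t.left, ?_⟩
    have := congrArg CommaMorphism.left ht
    simpa using this
  · intro h sq
    obtain ⟨d, hd⟩ := h sq.left sq.right (sq.w)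
    have sw : sq.left ≫ f = j ≫ sq.right := sq.w
    have hw : j ≫ sq.right = j ≫ (d ≫ f) := by
      rw [← sw, ← hd, Category.assoc]
    refine ⟨Arrow.homMk' (u := d) (v := pushout.desc sq.right (d ≫ f) hw)
      (by exact (pushout.inr_desc _ _ _).symm), ?_⟩
    ext
    · simpa using hd
    · exact pushout.inl_desc _ _ _
end

section
/- Let R be the binary relation on the set ℕ^ℕ of sequences of natural numbers defined by: R x y holds if and only if for every j, either y(j) = x(j) or y(j) = x(j) + 1. Then the equivalence relation generated by R does not relate the constant sequence (1,1,1,…) to the sequence (1,2,3,…) given by n ↦ n + 1. (Equivalently: in the countable power of the reflexive directed graph on ℕ with edges n → n and n → n+1, there is no zigzag path between these two vertices.) -/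
lemma bounded_of_eqvGen {x y : ℕ → ℕ}
    (h : Relation.EqvGen (fun x y : ℕ → ℕ => ∀ j, y j = x j ∨ y j = x j + 1) x y) :
    ∃ n : ℤ, ∀ j, (y j : ℤ) - x j ≤ n ∧ (x j : ℤ) - y j ≤ n := by
  induction h with
  | rel a b hab =>
      exact ⟨1, fun j => by rcases hab j with h | h <;> simp [h]⟩
  | refl a => exact ⟨0, fun j => by simp⟩
  | symm a b _ ih =>
      obtain ⟨n, hn⟩ := ih
      exact ⟨n, fun j => ⟨(hn j).2, (hn j).1⟩⟩
  | trans a b c _ _ ih1 ih2 =>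
      obtain ⟨n, hn⟩ := ih1
      obtain ⟨m, hm⟩ := ih2
      exact ⟨n + m, fun j => by have := hn j; have := hm j; omega⟩

/-- Let `R` be the relation on sequences of natural numbers where `R x y` holds
iff each `y j` equals `x j` or `x j + 1`.  The equivalence relation generated by `R` does not
relate the constant sequence `1, 1, 1, …` to the sequence `n ↦ n + 1`. -/
theorem not_eqvGen_const_one_succ :
    ¬ Relation.EqvGen (fun x y : ℕ → ℕ => ∀ j, y j = x j ∨ y j = x j + 1)
      (fun _ => 1) (fun n => n + 1) := by
  intro h
  obtain ⟨n, hn⟩ := bounded_of_eqvGen h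
  have := (hn (n + 1).toNat).1
  simp at this
end

section
/- Let C be a category, κ a regular cardinal, and J a set of morphisms of C each of whose domains and codomains is κ-presentable. Then the full subcategory Inj(J) of J-injective objects is closed in C under κ-filtered colimits and under all small products that exist in C. -/
open CategoryTheory Limits

universe v u

/-- A small category `J` is `κ`-filtered if every diagram in `J` indexed by a small category
with fewer than `κ` arrows admits a cocone. -/
def IsCardinalFilteredCat (κ : Cardinal.{v}) (J : Cat.{v, v}) : Prop :=
  ∀ A : Cat.{v, v}, Cardinal.mk (Arrow A) < κ → ∀ F : A ⥤ J, Nonempty (Cocone F)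

/-- An object `X` of `C` is `κ`-presentable if `Hom(X, -)` preserves colimits indexed by any
`κ`-filtered small category. -/
def IsCardinalPresentableObj (κ : Cardinal.{v}) {C : Type u} [Category.{v} C] (X : C) : Prop :=
  ∀ J : Cat.{v, v}, IsCardinalFilteredCat κ J →
    Nonempty (PreservesColimitsOfShape J (coyoneda.obj (Opposite.op X)))

/-- A category has `κ`-filtered colimits if it has colimits of every `κ`-filtered small shape. -/
def HasCardinalFilteredColimits (κ : Cardinal.{v}) (C : Type u) [Category.{v} C] : Prop :=
  ∀ J : Cat.{v, v}, IsCardinalFilteredCat κ J → HasColimitsOfShape J C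

/-- A category is `κ`-accessible if `κ` is regular, it has `κ`-filtered colimits, and it has a
small set of `κ`-presentable objects of which every object is a `κ`-filtered colimit. -/
structure IsCardinalAccessibleCat (κ : Cardinal.{v}) (C : Type u) [Category.{v} C] : Prop where
  regular : κ.IsRegular
  hasFilteredColimits : HasCardinalFilteredColimits κ C
  exists_generators : ∃ S : Set C, Small.{v} (↥S) ∧ (∀ X ∈ S, IsCardinalPresentableObj κ X) ∧
    ∀ X : C, ∃ J : Cat.{v, v}, IsCardinalFilteredCat κ J ∧
      ∃ F : J ⥤ C, (∀ j : J, F.obj j ∈ S) ∧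
        ∃ c : Cocone F, Nonempty (IsColimit c) ∧ Nonempty (c.pt ≅ X)

/-- A category is accessible if it is `κ`-accessible for some regular cardinal `κ`. -/
def IsAccessibleCat (C : Type u) [Category.{v} C] : Prop :=
  ∃ κ : Cardinal.{v}, IsCardinalAccessibleCat κ C

/-- A category is locally presentable if it is accessible and cocomplete. -/
def IsLocallyPresentableCat (C : Type u) [Category.{v} C] : Prop :=
  IsAccessibleCat C ∧ HasColimitsOfSize.{v, v} C

/-- A full subcategory (given by a set of objects `A`) is closed under `κ`-filtered colimits if
the colimit of any `κ`-filtered diagram with values in `A` again lies in `A`. -/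
def ClosedUnderCardinalFilteredColimits (κ : Cardinal.{v}) {C : Type u} [Category.{v} C]
    (A : Set C) : Prop :=
  ∀ J : Cat.{v, v}, IsCardinalFilteredCat κ J → ∀ F : J ⥤ C, (∀ j : J, F.obj j ∈ A) →
    ∀ c : Cocone F, IsColimit c → c.pt ∈ A

/-- A full subcategory (given by a set of objects `A`) is closed under small products. -/
def ClosedUnderSmallProducts {C : Type u} [Category.{v} C] (A : Set C) : Prop :=
  ∀ (ι : Type v) (X : ι → C), (∀ i, X i ∈ A) → ∀ c : Fan X, IsLimit c → c.pt ∈ A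

/-- If every morphism in the set `J = {j i : P i ⟶ Q i}` has `κ`-presentable
domain and codomain, then the full subcategory of `J`-injective objects is closed in `C` under
`κ`-filtered colimits and under all small products that exist in `C`. -/
theorem injectives_closed_under_filtered_colimits_and_products
    {C : Type u} [Category.{v} C] (κ : Cardinal.{v}) (hκ : κ.IsRegular)
    {ι : Type v} (P Q : ι → C) (j : ∀ i, P i ⟶ Q i)
    (hP : ∀ i, IsCardinalPresentableObj κ (P i))
    (hQ : ∀ i, IsCardinalPresentableObj κ (Q i)) :
    ClosedUnderCardinalFilteredColimits κ
        {X : C | ∀ (i : ι) (h : P i ⟶ X), ∃ g : Q i ⟶ X, j i ≫ g = h} ∧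
      ClosedUnderSmallProducts
        {X : C | ∀ (i : ι) (h : P i ⟶ X), ∃ g : Q i ⟶ X, j i ≫ g = h} := by
  constructor
  · intro Jc hJc F hF c hc i h
    obtain ⟨pres⟩ := hP i Jc hJc
    have hc' := isColimitOfPreserves (coyoneda.obj (Opposite.op (P i))) hc
    obtain ⟨j₀, f, hf⟩ := Types.jointly_surjective _ hc' h
    obtain ⟨g, hg⟩ := hF j₀ i f
    refine ⟨g ≫ c.ι.app j₀, ?_⟩
    rw [← Category.assoc, hg]
    exact hf
  · intro ι' X hX c hc i h
    choose g hg using fun k => hX k i (h ≫ c.π.app ⟨k⟩)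
    refine ⟨hc.lift (Fan.mk (Q i) g), ?_⟩
    apply hc.hom_ext
    rintro ⟨k⟩
    rw [Category.assoc, hc.fac (Fan.mk (Q i) g) ⟨k⟩]
    exact hg k
end

section
/- In a model category C, a small product of weak equivalences between fibrant objects is a weak equivalence: if (f_i : X_i ⟶ Y_i)_{i ∈ I} is a small family of weak equivalences with every X_i and Y_i fibrant, and the products ∏ X_i and ∏ Y_i exist, then the induced morphism ∏ X_i ⟶ ∏ Y_i is a weak equivalence. -/
open CategoryTheory Limits

universe v u

variable {C : Type u} [Category.{v} C]

/-- `f` is a retract of `g` in the arrow category. -/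
def IsRetractOfMap {X Y Z W : C} (f : X ⟶ Y) (g : Z ⟶ W) : Prop :=
  ∃ (i : X ⟶ Z) (r : Z ⟶ X) (i' : Y ⟶ W) (r' : W ⟶ Y),
    i ≫ r = 𝟙 X ∧ i' ≫ r' = 𝟙 Y ∧ i ≫ g = f ≫ i' ∧ g ≫ r' = r ≫ f

/-- A (Quillen) model structure on a category: three classes of morphisms — weak equivalences,
fibrations and cofibrations — satisfying two-out-of-three, closure under retracts, the lifting
axioms and the factorization axioms. -/
structure ModelStructure (C : Type u) [Category.{v} C] where
  weq : MorphismProperty C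
  fib : MorphismProperty C
  cof : MorphismProperty C
  weq_comp : ∀ {X Y Z : C} (f : X ⟶ Y) (g : Y ⟶ Z), weq f → weq g → weq (f ≫ g)
  weq_cancel_left : ∀ {X Y Z : C} (f : X ⟶ Y) (g : Y ⟶ Z), weq f → weq (f ≫ g) → weq g
  weq_cancel_right : ∀ {X Y Z : C} (f : X ⟶ Y) (g : Y ⟶ Z), weq g → weq (f ≫ g) → weq f
  weq_retract : ∀ {X Y Z W : C} (f : X ⟶ Y) (g : Z ⟶ W), IsRetractOfMap f g → weq g → weq f
  fib_retract : ∀ {X Y Z W : C} (f : X ⟶ Y) (g : Z ⟶ W), IsRetractOfMap f g → fib g → fib f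
  cof_retract : ∀ {X Y Z W : C} (f : X ⟶ Y) (g : Z ⟶ W), IsRetractOfMap f g → cof g → cof f
  lift_cof_trivFib : ∀ {A B X Y : C} (i : A ⟶ B) (p : X ⟶ Y),
    cof i → weq p → fib p → HasLiftingProperty i p
  lift_trivCof_fib : ∀ {A B X Y : C} (i : A ⟶ B) (p : X ⟶ Y),
    cof i → weq i → fib p → HasLiftingProperty i p
  fact_cof_trivFib : ∀ {X Y : C} (f : X ⟶ Y),
    ∃ (Z : C) (i : X ⟶ Z) (p : Z ⟶ Y), cof i ∧ weq p ∧ fib p ∧ i ≫ p = f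
  fact_trivCof_fib : ∀ {X Y : C} (f : X ⟶ Y),
    ∃ (Z : C) (i : X ⟶ Z) (p : Z ⟶ Y), cof i ∧ weq i ∧ fib p ∧ i ≫ p = f

/-- Extract a lift from a lifting property. -/
lemma exists_lift_aux {A B E S : C} (i : A ⟶ B) (p : E ⟶ S) (h : HasLiftingProperty i p)
    {u : A ⟶ E} {v : B ⟶ S} (w : u ≫ p = i ≫ v) :
    ∃ l : B ⟶ E, i ≫ l = u ∧ l ≫ p = v := by
  obtain ⟨⟨l, h1, h2⟩⟩ := (h.sq_hasLift ⟨w⟩).exists_lift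
  exact ⟨l, h1, h2⟩

/-- Identities are weak equivalences. -/
lemma weq_id_aux (M : ModelStructure C) (X : C) : M.weq (𝟙 X) := by
  obtain ⟨Z, i, p, hc, hw, hf, hip⟩ := M.fact_cof_trivFib (𝟙 X)
  exact M.weq_retract _ p ⟨i, p, 𝟙 X, 𝟙 X, hip, Category.comp_id _,
    by rw [hip, Category.id_comp], by simp⟩ hw

/-- A map with the left lifting property against all trivial fibrations is a cofibration. -/
lemma cof_of_llp_aux (M : ModelStructure C) {A B : C} (g0 : A ⟶ B)
    (h : ∀ {E S : C} (p : E ⟶ S), M.weq p → M.fib p → HasLiftingProperty g0 p) : M.cof g0 := by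
  obtain ⟨Z, i, p, hc, hw, hf, hip⟩ := M.fact_cof_trivFib g0
  obtain ⟨L, hL1, hL2⟩ := exists_lift_aux g0 p (h p hw hf)
    (u := i) (v := 𝟙 B) (by rw [hip, Category.comp_id])
  refine M.cof_retract g0 i ⟨𝟙 A, 𝟙 A, L, p, Category.comp_id _, hL2, ?_, ?_⟩ hc
  · rw [Category.id_comp, hL1]
  · rw [hip, Category.id_comp]

/-- A map with the right lifting property against all trivial cofibrations is a fibration. -/
lemma fib_of_rlp_aux (M : ModelStructure C) {E S : C} (p0 : E ⟶ S)
    (h : ∀ {A B : C} (i : A ⟶ B), M.cof i → M.weq i → HasLiftingProperty i p0) : M.fib p0 := by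
  obtain ⟨Z, i, q, hic, hiw, hqf, hiq⟩ := M.fact_trivCof_fib p0
  obtain ⟨L, hL1, hL2⟩ := exists_lift_aux i p0 (h i hic hiw)
    (u := 𝟙 E) (v := q) (by rw [Category.id_comp, hiq])
  refine M.fib_retract p0 q ⟨i, L, 𝟙 S, 𝟙 S, hL1, Category.comp_id _, ?_, ?_⟩ hqf
  · rw [hiq, Category.comp_id]
  · rw [Category.comp_id, hL2]

/-- Cofibrations are closed under composition. -/
lemma cof_comp_aux (M : ModelStructure C) {A B D : C} (g1 : A ⟶ B) (g2 : B ⟶ D)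
    (h1 : M.cof g1) (h2 : M.cof g2) : M.cof (g1 ≫ g2) := by
  refine cof_of_llp_aux M _ (fun p hw hf => ?_)
  constructor
  intro u v sq
  obtain ⟨l1, hl1a, hl1b⟩ := exists_lift_aux g1 p (M.lift_cof_trivFib g1 p h1 hw hf)
    (u := u) (v := g2 ≫ v) (by rw [sq.w, Category.assoc])
  obtain ⟨l2, hl2a, hl2b⟩ := exists_lift_aux g2 p (M.lift_cof_trivFib g2 p h2 hw hf)
    (u := l1) (v := v) hl1b
  exact ⟨⟨⟨l2, by rw [Category.assoc, hl2a, hl1a], hl2b⟩⟩⟩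

/-- Fibrations are closed under composition. -/
lemma fib_comp_aux (M : ModelStructure C) {E F S : C} (q1 : E ⟶ F) (q2 : F ⟶ S)
    (h1 : M.fib q1) (h2 : M.fib q2) : M.fib (q1 ≫ q2) := by
  refine fib_of_rlp_aux M _ (fun i hic hiw => ?_)
  constructor
  intro u v sq
  obtain ⟨l1, hl1a, hl1b⟩ := exists_lift_aux i q2 (M.lift_trivCof_fib i q2 hic hiw h2)
    (u := u ≫ q1) (v := v) (by rw [Category.assoc, sq.w])
  obtain ⟨l2, hl2a, hl2b⟩ := exists_lift_aux i q1 (M.lift_trivCof_fib i q1 hic hiw h1)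
    (u := u) (v := l1) hl1a.symm
  exact ⟨⟨⟨l2, hl2a, by rw [← Category.assoc, hl2b, hl1b]⟩⟩⟩

/-- `prod.snd : W ⨯ Z ⟶ Z` is a fibration if `W` is fibrant. -/
lemma fib_snd_aux (M : ModelStructure C) [HasTerminal C] {W Z : C} [HasBinaryProduct W Z]
    (hW : M.fib (terminal.from W)) : M.fib (prod.snd : W ⨯ Z ⟶ Z) := by
  refine fib_of_rlp_aux M _ (fun i hic hiw => ?_)
  constructor
  intro u v sq
  obtain ⟨l1, hl1a, -⟩ := exists_lift_aux i (terminal.from W)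
    (M.lift_trivCof_fib i _ hic hiw hW)
    (u := u ≫ prod.fst) (v := terminal.from _) (terminalIsTerminal.hom_ext _ _)
  refine ⟨⟨⟨prod.lift l1 v, ?_, by exact prod.lift_snd _ _⟩⟩⟩
  apply Limits.prod.hom_ext
  · rw [Category.assoc, prod.lift_fst, hl1a]
  · rw [Category.assoc, prod.lift_snd, sq.w]

/-- In a model category, a small product of weak equivalences between fibrant
objects is a weak equivalence. -/
theorem product_of_weak_equivalences_between_fibrant
    [HasFiniteLimits C] [HasFiniteColimits C] (M : ModelStructure C)
    {ι : Type v} {X Y : ι → C} [HasProduct X] [HasProduct Y]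
    (f : ∀ i, X i ⟶ Y i) (hf : ∀ i, M.weq (f i))
    (hX : ∀ i, M.fib (terminal.from (X i))) (hY : ∀ i, M.fib (terminal.from (Y i))) :
    M.weq (Limits.Pi.map f) := by
  classical
  -- per-component factorizations f k = j k ≫ p k with j trivial cof, p trivial fib
  choose Z j p hjc hjw hpf hjp using fun k => M.fact_trivCof_fib (f k)
  have hpw : ∀ k, M.weq (p k) := fun k =>
    M.weq_cancel_left (j k) (p k) (hjw k) (by rw [hjp k]; exact hf k)
  -- retractions of the j k (X k is fibrant)
  have hrk' : ∀ k, ∃ rk : Z k ⟶ X k, j k ≫ rk = 𝟙 (X k) := fun k => by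
    obtain ⟨l, hl, -⟩ := exists_lift_aux (j k) (terminal.from (X k))
      (M.lift_trivCof_fib _ _ (hjc k) (hjw k) (hX k))
      (u := 𝟙 (X k)) (v := terminal.from (Z k)) (terminalIsTerminal.hom_ext _ _)
    exact ⟨l, hl⟩
  choose rk hrk using hrk'
  -- per-component path objects for Y k
  choose P wp dd hwpc hwpw hddf hwdd using
    fun k => M.fact_trivCof_fib (prod.lift (𝟙 (Y k)) (𝟙 (Y k)))
  have hwddf : ∀ k, wp k ≫ dd k ≫ prod.fst = 𝟙 (Y k) := fun k => by
    rw [← Category.assoc, hwdd k, prod.lift_fst]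
  have hwdds : ∀ k, wp k ≫ dd k ≫ prod.snd = 𝟙 (Y k) := fun k => by
    rw [← Category.assoc, hwdd k, prod.lift_snd]
  have hd1f : ∀ k, M.fib (dd k ≫ prod.snd) := fun k =>
    fib_comp_aux M _ _ (hddf k) (fib_snd_aux M (hY k))
  have hd1w : ∀ k, M.weq (dd k ≫ prod.snd) := fun k =>
    M.weq_cancel_left (wp k) _ (hwpw k) (by rw [hwdds k]; exact weq_id_aux M _)
  -- per-component homotopies H k between rk k ≫ f k and p k
  have hH' : ∀ k, ∃ H : Z k ⟶ P k, j k ≫ H = f k ≫ wp k ∧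
      H ≫ dd k = prod.lift (rk k ≫ f k) (p k) := fun k => by
    refine exists_lift_aux (j k) (dd k) (M.lift_trivCof_fib _ _ (hjc k) (hjw k) (hddf k)) ?_
    rw [Category.assoc, hwdd k]
    apply Limits.prod.hom_ext
    · rw [Category.assoc, prod.lift_fst, Category.comp_id, Category.assoc, prod.lift_fst,
        ← Category.assoc, hrk k, Category.id_comp]
    · rw [Category.assoc, prod.lift_snd, Category.comp_id, Category.assoc, prod.lift_snd, hjp k]
  choose H hH1 hH2 using hH'
  have hH2f : ∀ k, H k ≫ dd k ≫ prod.fst = rk k ≫ f k := fun k => by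
    rw [← Category.assoc, hH2 k, prod.lift_fst]
  have hH2s : ∀ k, H k ≫ dd k ≫ prod.snd = p k := fun k => by
    rw [← Category.assoc, hH2 k, prod.lift_snd]
  -- cofibrant replacement of ∏ X
  obtain ⟨Xh, ψ, φ, hψc, hφw, hφf, hψφ⟩ := M.fact_cof_trivFib (initial.to (∏ᶜ X))
  -- factor φ ≫ Pi.map f as cofibration followed by trivial fibration
  obtain ⟨V, c, t, hcc, htw, htf, hct⟩ := M.fact_cof_trivFib (φ ≫ Limits.Pi.map f)
  have hGπ : ∀ k, c ≫ t ≫ Pi.π Y k = φ ≫ Pi.π X k ≫ f k := fun k => by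
    have h1 : Limits.Pi.map f ≫ Pi.π Y k = Pi.π X k ≫ f k := by
      simp [Limits.Pi.map, Limits.Pi.π]
    rw [← Category.assoc, hct, Category.assoc, h1]
  -- lifts μ k : V ⟶ Z k
  have hμ' : ∀ k, ∃ μ : V ⟶ Z k, c ≫ μ = φ ≫ Pi.π X k ≫ j k ∧
      μ ≫ p k = t ≫ Pi.π Y k := fun k => by
    refine exists_lift_aux c (p k) (M.lift_cof_trivFib _ _ hcc (hpw k) (hpf k)) ?_
    simp only [Category.assoc]
    rw [hjp k, hGπ k]
  choose μ hμ1 hμ2 using hμ'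
  -- the retraction ρ
  have hρbπ : ∀ k, Pi.lift (fun k => μ k ≫ rk k) ≫ Pi.π X k = μ k ≫ rk k := fun k =>
    Pi.lift_π _ _
  have hcρb : c ≫ Pi.lift (fun k => μ k ≫ rk k) = φ := by
    apply Pi.hom_ext; intro k
    rw [Category.assoc, hρbπ k, ← Category.assoc, hμ1 k]
    simp only [Category.assoc]
    rw [hrk k, Category.comp_id]
  obtain ⟨ρh, hcρh, hρhφ⟩ := exists_lift_aux c φ (M.lift_cof_trivFib c φ hcc hφw hφf)
    (u := 𝟙 Xh) (v := Pi.lift (fun k => μ k ≫ rk k)) (by rw [Category.id_comp, hcρb])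
  -- cylinder object on V
  obtain ⟨CV, κ, σ, hκc, hσw, hσf, hκσ⟩ := M.fact_cof_trivFib (coprod.desc (𝟙 V) (𝟙 V))
  -- V is cofibrant
  have hVc : M.cof (initial.to V) := by
    have hh : initial.to V = ψ ≫ c := initialIsInitial.hom_ext _ _
    rw [hh]; exact cof_comp_aux M ψ c hψc hcc
  have hinl : M.cof (coprod.inl : V ⟶ V ⨿ V) := by
    refine cof_of_llp_aux M _ (fun q hqw hqf => ?_)
    constructor; intro u v sq
    obtain ⟨l2, -, hl2b⟩ := exists_lift_aux (initial.to V) q (M.lift_cof_trivFib _ _ hVc hqw hqf)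
      (u := initial.to _) (v := coprod.inr ≫ v) (initialIsInitial.hom_ext _ _)
    refine ⟨⟨⟨coprod.desc u l2, by exact coprod.inl_desc _ _, ?_⟩⟩⟩
    apply coprod.hom_ext
    · rw [← Category.assoc, coprod.inl_desc, sq.w]
    · rw [← Category.assoc, coprod.inr_desc, hl2b]
  have hi0σ : (coprod.inl : V ⟶ V ⨿ V) ≫ κ ≫ σ = 𝟙 V := by
    rw [← Category.assoc, Category.assoc, hκσ, coprod.inl_desc]
  have hi1σ : (coprod.inr : V ⟶ V ⨿ V) ≫ κ ≫ σ = 𝟙 V := by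
    rw [← Category.assoc, Category.assoc, hκσ, coprod.inr_desc]
  have hi0c : M.cof ((coprod.inl : V ⟶ V ⨿ V) ≫ κ) := cof_comp_aux M _ _ hinl hκc
  have hi0w : M.weq ((coprod.inl : V ⟶ V ⨿ V) ≫ κ) := by
    refine M.weq_cancel_right _ σ hσw ?_
    rw [Category.assoc, hi0σ]
    exact weq_id_aux M _
  -- lifts Λ k : CV ⟶ P k  (converting right homotopies to a left homotopy)
  have hΛ' : ∀ k, ∃ Λ : CV ⟶ P k,
      κ ≫ Λ = coprod.desc (μ k ≫ H k) (t ≫ Pi.π Y k ≫ wp k) ∧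
      Λ ≫ dd k ≫ prod.snd = σ ≫ t ≫ Pi.π Y k := fun k => by
    refine exists_lift_aux κ (dd k ≫ prod.snd)
      (M.lift_cof_trivFib _ _ hκc (hd1w k) (hd1f k)) ?_
    apply coprod.hom_ext
    · rw [← Category.assoc, coprod.inl_desc]
      simp only [Category.assoc]
      rw [hH2s k, hμ2 k, ← Category.assoc, ← Category.assoc, Category.assoc coprod.inl κ σ,
        hi0σ, Category.id_comp]
    · rw [← Category.assoc, coprod.inr_desc]
      simp only [Category.assoc]
      rw [hwdds k, Category.comp_id, ← Category.assoc, ← Category.assoc,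
        Category.assoc coprod.inr κ σ, hi1σ, Category.id_comp]
  choose Λ hΛ1 hΛ2 using hΛ'
  -- the assembled left homotopy K : CV ⟶ ∏ Y
  have hi0K : ((coprod.inl : V ⟶ V ⨿ V) ≫ κ) ≫ Pi.lift (fun k => Λ k ≫ dd k ≫ prod.fst)
      = (ρh ≫ c) ≫ t := by
    apply Pi.hom_ext; intro k
    simp only [Category.assoc, Pi.lift_π]
    rw [← Category.assoc κ (Λ k), hΛ1 k, ← Category.assoc, coprod.inl_desc]
    simp only [Category.assoc]
    rw [hH2f k, hGπ k, ← Category.assoc ρh φ, hρhφ]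
    rw [← Category.assoc (Pi.lift fun k => μ k ≫ rk k) (Pi.π X k) (f k), hρbπ k, Category.assoc]
  have hi1K : ((coprod.inr : V ⟶ V ⨿ V) ≫ κ) ≫ Pi.lift (fun k => Λ k ≫ dd k ≫ prod.fst)
      = t := by
    apply Pi.hom_ext; intro k
    simp only [Category.assoc, Pi.lift_π]
    rw [← Category.assoc κ (Λ k), hΛ1 k, ← Category.assoc, coprod.inr_desc]
    simp only [Category.assoc]
    rw [hwddf k, Category.comp_id]
  -- lift the left homotopy through the trivial fibration t
  obtain ⟨Kh, hKh1, hKh2⟩ := exists_lift_aux κ t (M.lift_cof_trivFib κ t hκc htw htf)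
    (u := coprod.desc (ρh ≫ c) (𝟙 V)) (v := Pi.lift (fun k => Λ k ≫ dd k ≫ prod.fst)) (by
      apply coprod.hom_ext
      · rw [← Category.assoc, coprod.inl_desc, ← Category.assoc, hi0K]
      · rw [← Category.assoc, coprod.inr_desc, Category.id_comp, ← Category.assoc, hi1K])
  have hi0Kh : (coprod.inl : V ⟶ V ⨿ V) ≫ κ ≫ Kh = ρh ≫ c := by
    rw [hKh1, coprod.inl_desc]
  have hi1Kh : (coprod.inr : V ⟶ V ⨿ V) ≫ κ ≫ Kh = 𝟙 V := by
    rw [hKh1, coprod.inr_desc]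
  -- path object on V
  obtain ⟨PV, wV, ddV, hwVc, hwVw, hddVf, hwddV⟩ :=
    M.fact_trivCof_fib (prod.lift (𝟙 V) (𝟙 V))
  have hwVf : wV ≫ ddV ≫ prod.fst = 𝟙 V := by
    rw [← Category.assoc, hwddV, prod.lift_fst]
  have hwVs : wV ≫ ddV ≫ prod.snd = 𝟙 V := by
    rw [← Category.assoc, hwddV, prod.lift_snd]
  -- convert the left homotopy into a right homotopy Γ
  obtain ⟨L', hL'1, hL'2⟩ := exists_lift_aux ((coprod.inl : V ⟶ V ⨿ V) ≫ κ) ddV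
    (M.lift_trivCof_fib _ ddV hi0c hi0w hddVf)
    (u := (ρh ≫ c) ≫ wV) (v := prod.lift (σ ≫ ρh ≫ c) Kh) (by
      apply Limits.prod.hom_ext
      · simp only [Category.assoc, prod.lift_fst]
        rw [hwVf, Category.comp_id, reassoc_of% hi0σ]
      · simp only [Category.assoc, prod.lift_snd]
        rw [hwVs, Category.comp_id, hi0Kh])
  -- Γ := i1 ≫ L'
  have hL'2f : L' ≫ ddV ≫ prod.fst = σ ≫ ρh ≫ c := by
    rw [← Category.assoc, hL'2, prod.lift_fst]
  have hL'2s : L' ≫ ddV ≫ prod.snd = Kh := by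
    rw [← Category.assoc, hL'2, prod.lift_snd]
  have hΓ0 : ((coprod.inr : V ⟶ V ⨿ V) ≫ κ) ≫ L' ≫ ddV ≫ prod.fst = ρh ≫ c := by
    simp only [Category.assoc]
    rw [hL'2f, reassoc_of% hi1σ]
  have hΓ1 : ((coprod.inr : V ⟶ V ⨿ V) ≫ κ) ≫ L' ≫ ddV ≫ prod.snd = 𝟙 V := by
    simp only [Category.assoc]
    rw [hL'2s, hi1Kh]
  have he0w : M.weq (ddV ≫ prod.fst) :=
    M.weq_cancel_left wV _ hwVw (by rw [hwVf]; exact weq_id_aux M _)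
  have he1w : M.weq (ddV ≫ prod.snd) :=
    M.weq_cancel_left wV _ hwVw (by rw [hwVs]; exact weq_id_aux M _)
  have hΓw : M.weq (((coprod.inr : V ⟶ V ⨿ V) ≫ κ) ≫ L') := by
    refine M.weq_cancel_right _ (ddV ≫ prod.snd) he1w ?_
    rw [Category.assoc, hΓ1]
    exact weq_id_aux M _
  have hec : M.weq (ρh ≫ c) := by
    rw [← hΓ0, ← Category.assoc]
    exact M.weq_comp _ _ hΓw he0w
  -- c is a retract of ρh ≫ c, hence a weak equivalence
  have hcw : M.weq c := by
    refine M.weq_retract c (ρh ≫ c) ⟨c, ρh, 𝟙 V, 𝟙 V, hcρh, Category.comp_id _, ?_, ?_⟩ hec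
    · rw [← Category.assoc, hcρh, Category.id_comp, Category.comp_id]
    · rw [Category.comp_id]
  -- conclude
  have hfinal : M.weq (φ ≫ Limits.Pi.map f) := by
    rw [← hct]
    exact M.weq_comp c t hcw htw
  exact M.weq_cancel_left φ (Limits.Pi.map f) hφw hfinal
end

section
/- Let F : A ⥤ B be a functor between small categories, regarded as a morphism of Cat. Then: (1) F has the right lifting property with respect to the unique functor from the empty category to the terminal category if and only if F is surjective on objects; (2) F has the right lifting property with respect to the canonical functor from the discrete category on two objects {0, 1} to the walking arrow category {0 → 1} (identity on objects) if and only if F is full; (3) F has the right lifting property with respect to the canonical functor from the walking parallel pair {0 ⇉ 1} to the walking arrow {0 → 1} (identity on objects, sending both nonidentity arrows to the arrow 0 → 1) if and only if F is faithful. -/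
open CategoryTheory CategoryTheory.Limits

/-- The canonical identity-on-objects functor from the discrete category on two objects to the
walking arrow `{0 → 1}` (realized as the preorder `Fin 2`). -/
def discreteTwoToWalkingArrow : Discrete (Fin 2) ⥤ Fin 2 := Discrete.functor (fun i => i)

/-- The canonical identity-on-objects functor from the walking parallel pair `{0 ⇉ 1}` to the
walking arrow `{0 → 1}`, sending both nonidentity arrows to the arrow `0 → 1`. -/
def parallelPairToWalkingArrow : WalkingParallelPair ⥤ Fin 2 :=
  parallelPair (homOfLE (by decide : (0 : Fin 2) ≤ 1)) (homOfLE (by decide))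

lemma discrete_functor_ext' {J C : Type*} [Category C] {f g : Discrete J ⥤ C}
    (h : ∀ j : J, f.obj ⟨j⟩ = g.obj ⟨j⟩) : f = g := by
  refine CategoryTheory.Functor.ext (fun j => h j.as) ?_
  intro X Y φ
  obtain rfl : X = Y := by ext; exact φ.down.down
  rw [Subsingleton.elim φ (𝟙 X)]
  simp

/-- For a functor `F : A ⥤ B` between small categories, regarded as a morphism
of `Cat`:
(1) `F` has the right lifting property with respect to `∅ ⟶ {•}` iff it is surjective on
objects;
(2) `F` has the right lifting property with respect to `{0 1} ⟶ {0 → 1}` iff it is full;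
(3) `F` has the right lifting property with respect to `{0 ⇉ 1} ⟶ {0 → 1}` iff it is
faithful. -/
theorem rlp_characterisations_in_Cat {A B : Type} [SmallCategory A] [SmallCategory B]
    (F : A ⥤ B) :
    (HasLiftingProperty
        (show Cat.of (Discrete PEmpty) ⟶ Cat.of (Discrete PUnit) from (Functor.empty _).toCatHom)
        (show Cat.of A ⟶ Cat.of B from F.toCatHom) ↔ Function.Surjective F.obj) ∧
    (HasLiftingProperty
        (show Cat.of (Discrete (Fin 2)) ⟶ Cat.of (Fin 2) from discreteTwoToWalkingArrow.toCatHom)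
        (show Cat.of A ⟶ Cat.of B from F.toCatHom) ↔ F.Full) ∧
    (HasLiftingProperty
        (show Cat.of WalkingParallelPair ⟶ Cat.of (Fin 2) from parallelPairToWalkingArrow.toCatHom)
        (show Cat.of A ⟶ Cat.of B from F.toCatHom) ↔ F.Faithful) := by
  refine ⟨?_, ?_, ?_⟩
  ·
      constructor
      · intro h b
        have sq : CommSq (Functor.empty (Cat.of A)).toCatHom (show Cat.of (Discrete PEmpty) ⟶ Cat.of (Discrete PUnit) from (Functor.empty _).toCatHom) (show Cat.of A ⟶ Cat.of B from F.toCatHom) ((Functor.const _).obj b).toCatHom :=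
          ⟨Cat.Hom.ext (Functor.empty_ext' _ _)⟩
        obtain ⟨⟨l⟩⟩ := h.sq_hasLift sq
        exact ⟨l.l.toFunctor.obj ⟨⟨⟩⟩, Functor.congr_obj (congrArg Cat.Hom.toFunctor l.fac_right) ⟨⟨⟩⟩⟩
      · intro hs
        constructor
        intro f g sq
        obtain ⟨a, ha⟩ := hs (g.toFunctor.obj ⟨⟨⟩⟩)
        apply CommSq.HasLift.mk'
        refine ⟨((Functor.const _).obj a).toCatHom, Cat.Hom.ext (Functor.empty_ext' _ _), ?_⟩
        apply Cat.Hom.ext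
        apply discrete_functor_ext'
        rintro ⟨⟩
        exact ha
  ·
      constructor
      · intro h
        constructor
        intro X Y ψ
        have sq : CommSq (show Cat.of (Discrete (Fin 2)) ⟶ Cat.of A from Functor.toCatHom (Discrete.functor ![X, Y]))
            (show Cat.of (Discrete (Fin 2)) ⟶ Cat.of (Fin 2) from discreteTwoToWalkingArrow.toCatHom)
            (show Cat.of A ⟶ Cat.of B from F.toCatHom)
            (show Cat.of (Fin 2) ⟶ Cat.of B from Functor.toCatHom (ComposableArrows.mk₁ ψ)) := by
          constructor
          apply Cat.Hom.ext
          apply discrete_functor_ext'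
          intro j
          fin_cases j <;> rfl
        obtain ⟨⟨l⟩⟩ := h.sq_hasLift sq
        let L : Fin 2 ⥤ A := l.l.toFunctor
        have hfl : discreteTwoToWalkingArrow ⋙ L = Discrete.functor ![X, Y] := congrArg Cat.Hom.toFunctor l.fac_left
        have hfr : L ⋙ F = ComposableArrows.mk₁ ψ := congrArg Cat.Hom.toFunctor l.fac_right
        have h0 : X = L.obj 0 := (Functor.congr_obj hfl ⟨0⟩).symm
        have h1 : L.obj 1 = Y := Functor.congr_obj hfl ⟨1⟩
        refine ⟨eqToHom h0 ≫ L.map (homOfLE (by decide : (0:Fin 2) ≤ 1)) ≫ eqToHom h1, ?_⟩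
        have := Functor.congr_hom hfr (homOfLE (by decide : (0:Fin 2) ≤ 1))
        simp only [Functor.comp_map] at this
        simp [this, eqToHom_map]
        change eqToHom (Eq.refl (F.obj X)) ≫ (ψ ≫ eqToHom (_ : F.obj Y = F.obj (L.obj 1))) ≫ eqToHom (_ : F.obj (L.obj 1) = F.obj Y) = ψ
        simp
        erw [eqToHom_trans, eqToHom_refl, Category.comp_id]
      · intro hF
        constructor
        intro f g sq
        let G : Fin 2 ⥤ B := g.toFunctor
        have hw : (f.toFunctor : Discrete (Fin 2) ⥤ A) ⋙ F = discreteTwoToWalkingArrow ⋙ G := congrArg Cat.Hom.toFunctor sq.w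
        have h0 : F.obj (f.toFunctor.obj ⟨0⟩) = G.obj 0 := (Functor.congr_obj hw ⟨0⟩)
        have h1 : F.obj (f.toFunctor.obj ⟨1⟩) = G.obj 1 := (Functor.congr_obj hw ⟨1⟩)
        obtain ⟨φ, hφ⟩ := hF.map_surjective
          (eqToHom h0 ≫ G.map (homOfLE (by decide : (0:Fin 2) ≤ 1)) ≫ eqToHom h1.symm)
        apply CommSq.HasLift.mk'
        refine ⟨show Cat.of (Fin 2) ⟶ Cat.of A from Functor.toCatHom (ComposableArrows.mk₁ φ), ?_, ?_⟩
        · apply Cat.Hom.ext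
          apply discrete_functor_ext'
          intro j
          fin_cases j <;> rfl
        · apply Cat.Hom.ext
          refine ComposableArrows.ext₁ h0 h1 ?_
          show F.map ((ComposableArrows.mk₁ φ).map _) = _
          rw [show ((ComposableArrows.mk₁ φ).map (homOfLE (by decide : (0:Fin 2) ≤ 1))) = φ from rfl]
          exact hφ
  ·
      constructor
      · intro h
        constructor
        intro X Y u v huv
        have sq : CommSq (show Cat.of WalkingParallelPair ⟶ Cat.of A from (parallelPair u v).toCatHom)
            (show Cat.of WalkingParallelPair ⟶ Cat.of (Fin 2) from parallelPairToWalkingArrow.toCatHom)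
            (show Cat.of A ⟶ Cat.of B from F.toCatHom)
            (show Cat.of (Fin 2) ⟶ Cat.of B from Functor.toCatHom (ComposableArrows.mk₁ (F.map u))) := by
          constructor
          apply Cat.Hom.ext
          show (parallelPair u v) ⋙ F = parallelPairToWalkingArrow ⋙ (ComposableArrows.mk₁ (F.map u) : Fin 2 ⥤ B)
          refine CategoryTheory.Functor.ext (fun x => by cases x <;> rfl) ?_
          intro x y φ
          cases φ using WalkingParallelPairHom.casesOn with
          | left => erw [eqToHom_refl, eqToHom_refl, Category.comp_id, Category.id_comp]; rfl
          | right => erw [eqToHom_refl, eqToHom_refl, Category.comp_id, Category.id_comp]; exact huv.symm.trans rfl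
          | id x => cases x <;> (erw [eqToHom_refl, Category.comp_id, Category.id_comp]; simp; rfl)
        obtain ⟨⟨l⟩⟩ := h.sq_hasLift sq
        let L : Fin 2 ⥤ A := l.l.toFunctor
        have hfl : parallelPairToWalkingArrow ⋙ L = parallelPair u v := congrArg Cat.Hom.toFunctor l.fac_left
        have hl := Functor.congr_hom hfl WalkingParallelPairHom.left
        have hr := Functor.congr_hom hfl WalkingParallelPairHom.right
        simp only [Functor.comp_map] at hl hr
        rw [show parallelPairToWalkingArrow.map WalkingParallelPairHom.right
            = parallelPairToWalkingArrow.map WalkingParallelPairHom.left from Subsingleton.elim _ _] at hr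
        have h2 := hl.symm.trans hr
        simp only [parallelPair_map_left, parallelPair_map_right] at h2
        rw [cancel_epi, cancel_mono] at h2
        exact h2
      · intro hF
        constructor
        intro f g sq
        let G : Fin 2 ⥤ B := g.toFunctor
        let f' : WalkingParallelPair ⥤ A := f.toFunctor
        have hw : f' ⋙ F = parallelPairToWalkingArrow ⋙ G := congrArg Cat.Hom.toFunctor sq.w
        have hl := Functor.congr_hom hw WalkingParallelPairHom.left
        have hr := Functor.congr_hom hw WalkingParallelPairHom.right
        simp only [Functor.comp_map] at hl hr
        rw [show parallelPairToWalkingArrow.map WalkingParallelPairHom.right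
            = parallelPairToWalkingArrow.map WalkingParallelPairHom.left from Subsingleton.elim _ _] at hr
        have huv : f'.map WalkingParallelPairHom.left = f'.map WalkingParallelPairHom.right := by
          apply hF.map_injective
          rw [hl, hr]
        apply CommSq.HasLift.mk'
        refine ⟨show Cat.of (Fin 2) ⟶ Cat.of A from Functor.toCatHom (ComposableArrows.mk₁ (f'.map WalkingParallelPairHom.left)), ?_, ?_⟩
        · apply Cat.Hom.ext
          show parallelPairToWalkingArrow ⋙ (ComposableArrows.mk₁ (f'.map WalkingParallelPairHom.left) : Fin 2 ⥤ A) = f'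
          refine CategoryTheory.Functor.ext (fun x => by cases x <;> rfl) ?_
          intro x y φ
          cases φ using WalkingParallelPairHom.casesOn with
          | left => erw [eqToHom_refl, eqToHom_refl, Category.comp_id, Category.id_comp]; rfl
          | right => erw [eqToHom_refl, eqToHom_refl, Category.comp_id, Category.id_comp]; exact (Eq.trans rfl huv)
          | id x => cases x <;> (erw [eqToHom_refl, Category.comp_id, Category.id_comp]; simp; rfl)
        · apply Cat.Hom.ext
          show (ComposableArrows.mk₁ (f'.map WalkingParallelPairHom.left) : Fin 2 ⥤ A) ⋙ F = G
          have h0 : F.obj (f'.obj WalkingParallelPair.zero) = G.obj 0 := Functor.congr_obj hw WalkingParallelPair.zero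
          have h1 : F.obj (f'.obj WalkingParallelPair.one) = G.obj 1 := Functor.congr_obj hw WalkingParallelPair.one
          refine ComposableArrows.ext₁ h0 h1 ?_
          show F.map ((ComposableArrows.mk₁ (f'.map WalkingParallelPairHom.left)).map _) = _
          rw [show ((ComposableArrows.mk₁ (f'.map WalkingParallelPairHom.left)).map
            (homOfLE (by decide : (0:Fin 2) ≤ 1))) = f'.map WalkingParallelPairHom.left from rfl]
          refine hl.trans ?_
          rfl
end
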